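/- arXiv:math/0610673 — 9 statements merged into one kernel-verified Lean document; each statement's English description precedes it below -/
import Mathlib

section
/- Let (y,z) be a solution of the Hamiltonian system (9) with parameters (α₀,α₁,α₂,α₃,α₄) on an open set U ⊆ ℂ∖{0,1}. Then the pair ỹ(t) := 1 − y(1−t), z̃(t) := −z(1−t), defined on 1−U := {1−t : t ∈ U}, is a solution of the Hamiltonian system (9) with parameters (α₀,α₁,α₂,α₄,α₃) (i.e., with α₃ and α₄ interchanged). In particular, if α₃ = α₄ the system is invariant under this transformation σ₁. -/
/-- `(y, z)` is a (differentiable) solution of the Hamiltonian system (9) with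
parameters `(a0, a1, a2, a3, a4)` on the set `U`. -/
def IsHamSol (a0 a1 a2 a3 a4 : ℂ) (U : Set ℂ) (y z : ℂ → ℂ) : Prop :=
  ∀ t ∈ U, DifferentiableAt ℂ y t ∧ DifferentiableAt ℂ z t ∧
    t * (t - 1) * deriv y t =
      2 * y t * (y t - 1) * (y t - t) * z t - (a0 - 1) * y t * (y t - 1)
        - a3 * y t * (y t - t) - a4 * (y t - 1) * (y t - t) ∧
    t * (t - 1) * deriv z t =
      -(y t * (y t - 1) + (y t - 1) * (y t - t) + y t * (y t - t)) * z t ^ 2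
        + ((2 * y t - 1) * (a0 - 1) + (2 * y t - t) * a3 + (2 * y t - t - 1) * a4) * z t
        - (a1 + a2) * a2

/-- With `s = 1 - t`, the factors `ỹ`, `ỹ - 1`, `ỹ - t` of system (9) become `-(y - 1)`, `-y`,
`-(y - s)` and `t (t - 1)` becomes `s (s - 1)`; this swaps the roles of `α₃` and `α₄`. -/
theorem IsHamSol.reflect {a0 a1 a2 a3 a4 : ℂ} {U : Set ℂ} {y z : ℂ → ℂ}
    (hyz : IsHamSol a0 a1 a2 a3 a4 U y z) :
    IsHamSol a0 a1 a2 a4 a3 ((fun t => 1 - t) '' U)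
      (fun t => 1 - y (1 - t)) (fun t => -z (1 - t)) := by
  rintro _ ⟨s, hs, rfl⟩
  obtain ⟨hdy, hdz, hy_eq, hz_eq⟩ := hyz s hs
  have hs' : (1 : ℂ) - (1 - s) = s := sub_sub_cancel 1 s
  have hy : HasDerivAt y (deriv y s) (1 - (1 - s)) := by rw [hs']; exact hdy.hasDerivAt
  have hz : HasDerivAt z (deriv z s) (1 - (1 - s)) := by rw [hs']; exact hdz.hasDerivAt
  have hy' : HasDerivAt (fun t => 1 - y (1 - t)) (deriv y s) (1 - s) := by
    simpa using (hy.comp_const_sub 1 (1 - s)).const_sub 1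
  have hz' : HasDerivAt (fun t => -z (1 - t)) (deriv z s) (1 - s) := by
    simpa using (hz.comp_const_sub 1 (1 - s)).fun_neg
  refine ⟨hy'.differentiableAt, hz'.differentiableAt, ?_, ?_⟩
  · simp only [hy'.deriv, hs']
    linear_combination hy_eq
  · simp only [hz'.deriv, hs']
    linear_combination hz_eq

theorem ham_backlund_sigma1_general (a0 a1 a2 a3 a4 : ℂ) (U : Set ℂ) (y z : ℂ → ℂ)
    (hyz : IsHamSol a0 a1 a2 a3 a4 U y z) :
    IsHamSol a0 a1 a2 a4 a3 ((fun t => 1 - t) '' U)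
        (fun t => 1 - y (1 - t)) (fun t => -z (1 - t)) ∧
      (a3 = a4 →
        IsHamSol a0 a1 a2 a3 a4 ((fun t => 1 - t) '' U)
          (fun t => 1 - y (1 - t)) (fun t => -z (1 - t))) :=
  ⟨hyz.reflect, fun h34 => h34 ▸ hyz.reflect⟩

/-- **Symmetry σ₁ of the Hamiltonian system (9).** If `(y, z)` solves system (9) with
parameters `(α₀,α₁,α₂,α₃,α₄)` on the open set `U ⊆ ℂ∖{0,1}`, then
`ỹ(t) = 1 - y(1-t)`, `z̃(t) = -z(1-t)` solves system (9) with parameters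
`(α₀,α₁,α₂,α₄,α₃)` on `1 - U`; in particular, if `α₃ = α₄`, the system is invariant. -/
theorem ham_backlund_sigma1 (a0 a1 a2 a3 a4 : ℂ) (U : Set ℂ) (hU : IsOpen U)
    (hU01 : ∀ t ∈ U, t ≠ 0 ∧ t ≠ 1) (y z : ℂ → ℂ)
    (hyz : IsHamSol a0 a1 a2 a3 a4 U y z) :
    IsHamSol a0 a1 a2 a4 a3 ((fun t => 1 - t) '' U)
        (fun t => 1 - y (1 - t)) (fun t => -z (1 - t)) ∧
      (a3 = a4 →
        IsHamSol a0 a1 a2 a3 a4 ((fun t => 1 - t) '' U)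
          (fun t => 1 - y (1 - t)) (fun t => -z (1 - t))) :=
  ham_backlund_sigma1_general a0 a1 a2 a3 a4 U y z hyz
end

section
/- Let α₀,α₁,α₂,α₃,α₄ be complex parameters with α₀ + α₁ + 2α₂ + α₃ + α₄ = 1, and let (y,z) be a solution of the Hamiltonian system (9) on an open set U ⊆ ℂ∖{0,1} with z(t) ≠ 0 for all t ∈ U. Then the pair (ỹ, z̃) := (y + α₂/z, z) is a solution of the Hamiltonian system (9) on U with parameters (α₀+α₂, α₁+α₂, −α₂, α₂+α₃, α₂+α₄). (Bäcklund transformation s₂.) -/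
section HamiltonianField

variable {K : Type*} [Field K]

def hamFieldY (a0 a3 a4 t y z : K) : K :=
  2 * y * (y - 1) * (y - t) * z - (a0 - 1) * y * (y - 1)
    - a3 * y * (y - t) - a4 * (y - 1) * (y - t)

def hamFieldZ (a0 a1 a2 a3 a4 t y z : K) : K :=
  -(y * (y - 1) + (y - 1) * (y - t) + y * (y - t)) * z ^ 2
    + ((2 * y - 1) * (a0 - 1) + (2 * y - t) * a3 + (2 * y - t - 1) * a4) * z
    - (a1 + a2) * a2

variable {a0 a1 a2 a3 a4 : K}

theorem hamFieldY_s2 (hsum : a0 + a1 + 2 * a2 + a3 + a4 = 1) (t y : K) {z : K} (hz : z ≠ 0) :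
    hamFieldY (a0 + a2) (a2 + a3) (a2 + a4) t (y + a2 / z) z =
      hamFieldY a0 a3 a4 t y z - a2 / z ^ 2 * hamFieldZ a0 a1 a2 a3 a4 t y z := by
  obtain ⟨w, rfl⟩ : ∃ w, a2 = w * z := ⟨a2 / z, by field_simp⟩
  unfold hamFieldY hamFieldZ
  field_simp
  linear_combination -w ^ 2 * hsum

theorem hamFieldZ_s2 (hsum : a0 + a1 + 2 * a2 + a3 + a4 = 1) (t y : K) {z : K} (hz : z ≠ 0) :
    hamFieldZ (a0 + a2) (a1 + a2) (-a2) (a2 + a3) (a2 + a4) t (y + a2 / z) z =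
      hamFieldZ a0 a1 a2 a3 a4 t y z := by
  obtain ⟨w, rfl⟩ : ∃ w, a2 = w * z := ⟨a2 / z, by field_simp⟩
  have hw : w * z / z = w := by field_simp
  rw [hw]
  unfold hamFieldZ
  linear_combination 2 * w * z * hsum

end HamiltonianField

theorem isHamSol_iff_hamField {a0 a1 a2 a3 a4 : ℂ} {U : Set ℂ} {y z : ℂ → ℂ} :
    IsHamSol a0 a1 a2 a3 a4 U y z ↔
      ∀ t ∈ U, DifferentiableAt ℂ y t ∧ DifferentiableAt ℂ z t ∧
        t * (t - 1) * deriv y t = hamFieldY a0 a3 a4 t (y t) (z t) ∧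
        t * (t - 1) * deriv z t = hamFieldZ a0 a1 a2 a3 a4 t (y t) (z t) :=
  Iff.rfl

theorem ham_backlund_s2_general (a0 a1 a2 a3 a4 : ℂ)
    (hsum : a0 + a1 + 2 * a2 + a3 + a4 = 1)
    (U : Set ℂ)
    (y z : ℂ → ℂ)
    (hyz : IsHamSol a0 a1 a2 a3 a4 U y z)
    (hz : ∀ t ∈ U, z t ≠ 0) :
    IsHamSol (a0 + a2) (a1 + a2) (-a2) (a2 + a3) (a2 + a4) U
      (fun t => y t + a2 / z t) z := by
  rw [isHamSol_iff_hamField] at hyz ⊢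
  intro t ht
  obtain ⟨hy, hz', hy_eq, hz_eq⟩ := hyz t ht
  have hderiv : HasDerivAt (fun s => y s + a2 / z s)
      (deriv y t - a2 / z t ^ 2 * deriv z t) t := by
    refine (hy.hasDerivAt.add
      ((hasDerivAt_const t a2).fun_div hz'.hasDerivAt (hz t ht))).congr_deriv ?_
    ring
  refine ⟨hderiv.differentiableAt, hz', ?_, ?_⟩
  · rw [hderiv.deriv, hamFieldY_s2 hsum t (y t) (hz t ht), ← hy_eq, ← hz_eq]
    ring
  · rw [hamFieldZ_s2 hsum t (y t) (hz t ht), hz_eq]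

/-- **Bäcklund transformation s₂.** If `α₀ + α₁ + 2α₂ + α₃ + α₄ = 1` and `(y, z)` solves
the Hamiltonian system (9) on the open set `U ⊆ ℂ∖{0,1}` with `z` nowhere zero on `U`,
then `(y + α₂/z, z)` solves system (9) on `U` with parameters
`(α₀+α₂, α₁+α₂, −α₂, α₂+α₃, α₂+α₄)`. -/
theorem ham_backlund_s2 (a0 a1 a2 a3 a4 : ℂ)
    (hsum : a0 + a1 + 2 * a2 + a3 + a4 = 1)
    (U : Set ℂ) (hU : IsOpen U) (hU01 : ∀ t ∈ U, t ≠ 0 ∧ t ≠ 1)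
    (y z : ℂ → ℂ)
    (hyz : IsHamSol a0 a1 a2 a3 a4 U y z)
    (hz : ∀ t ∈ U, z t ≠ 0) :
    IsHamSol (a0 + a2) (a1 + a2) (-a2) (a2 + a3) (a2 + a4) U
      (fun t => y t + a2 / z t) z :=
  ham_backlund_s2_general a0 a1 a2 a3 a4 hsum U y z hyz hz
end

section
/- Let α₀,α₁,α₂,α₃,α₄ be complex parameters with α₀ + α₁ + 2α₂ + α₃ + α₄ = 1, and let (y,z) be a solution of the Hamiltonian system (9) on an open set U ⊆ ℂ∖{0,1} with y(t) ≠ t for all t ∈ U. Then the pair ỹ(t) := t(y(t)−1)/(y(t)−t), z̃(t) := −((y(t)−t)²·z(t) + (y(t)−t)·α₂)/((t−1)t) is a solution of the Hamiltonian system (9) on U with parameters (α₁, α₀, α₂, α₄, α₃). (Bäcklund transformation π₂.) -/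
/-!
The transformation is a birational change of variables, so the proof is a computation. By the
quotient rule, `t(t-1)ỹ'` and `t(t-1)z̃'` are rational in `t, y, z` and the quantities
`t(t-1)y'`, `t(t-1)z'`; substituting system (9) for the latter and eliminating `α₁` through
`α₀ + α₁ + 2α₂ + α₃ + α₄ = 1`, the two equations of (9) for `(ỹ, z̃)` become identities of rational
functions, whose denominators are powers of `y - t`, `t` and `t - 1`.
-/

section
variable {R : Type*} [CommRing R]

def hamRhsY (a0 a3 a4 t y z : R) : R :=
  2 * y * (y - 1) * (y - t) * z - (a0 - 1) * y * (y - 1) - a3 * y * (y - t) - a4 * (y - 1) * (y - t)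

def hamRhsZ (a0 a1 a2 a3 a4 t y z : R) : R :=
  -(y * (y - 1) + (y - 1) * (y - t) + y * (y - t)) * z ^ 2
    + ((2 * y - 1) * (a0 - 1) + (2 * y - t) * a3 + (2 * y - t - 1) * a4) * z - (a1 + a2) * a2
end

section
variable {K : Type*} [Field K]

def pi2Y (t y : K) : K := t * (y - 1) / (y - t)

def pi2Z (a2 t y z : K) : K := -((y - t) ^ 2 * z + (y - t) * a2) / ((t - 1) * t)

variable {a0 a1 a2 a3 a4 t y z dy dz : K}

theorem eq_hamRhsY_pi2 (hsum : a0 + a1 + 2 * a2 + a3 + a4 = 1) (ht1 : t ≠ 1) (hyt : y ≠ t)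
    (ey : t * (t - 1) * dy = hamRhsY a0 a3 a4 t y z) :
    t * (t - 1) * ((y * (y - 1) - t * (t - 1) * dy) / (y - t) ^ 2) =
      hamRhsY a1 a4 a3 t (pi2Y t y) (pi2Z a2 t y z) := by
  obtain rfl : a1 = 1 - a0 - 2 * a2 - a3 - a4 := by linear_combination hsum
  have : t - 1 ≠ 0 := sub_ne_zero.mpr ht1
  have : y - t ≠ 0 := sub_ne_zero.mpr hyt
  rw [ey]
  unfold hamRhsY pi2Y pi2Z
  field_simp
  ring

theorem eq_hamRhsZ_pi2 (hsum : a0 + a1 + 2 * a2 + a3 + a4 = 1) (ht0 : t ≠ 0)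
    (ht1 : t ≠ 1) (hyt : y ≠ t) (ey : t * (t - 1) * dy = hamRhsY a0 a3 a4 t y z)
    (ez : t * (t - 1) * dz = hamRhsZ a0 a1 a2 a3 a4 t y z) :
    t * (t - 1) * (((2 * t - 1) * ((y - t) ^ 2 * z + (y - t) * a2)
        - (2 * (y - t) * z + a2) * (t * (t - 1) * dy - t * (t - 1))
        - (y - t) ^ 2 * (t * (t - 1) * dz)) / (t * (t - 1)) ^ 2) =
      hamRhsZ a1 a0 a2 a4 a3 t (pi2Y t y) (pi2Z a2 t y z) := by
  rw [ey, ez]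
  obtain rfl : a1 = 1 - a0 - 2 * a2 - a3 - a4 := by linear_combination hsum
  have : t - 1 ≠ 0 := sub_ne_zero.mpr ht1
  have : y - t ≠ 0 := sub_ne_zero.mpr hyt
  unfold hamRhsY hamRhsZ pi2Y pi2Z
  field_simp
  ring
end

section
variable {𝕜 : Type*} [NontriviallyNormedField 𝕜] {y z : 𝕜 → 𝕜} {t y' z' : 𝕜}


theorem HasDerivAt.pi2Y (hy : HasDerivAt y y' t) (hyt : y t ≠ t) :
    HasDerivAt (fun s => pi2Y s (y s)) ((y t * (y t - 1) - t * (t - 1) * y') / (y t - t) ^ 2) t := by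
  have hd : y t - t ≠ 0 := sub_ne_zero.mpr hyt
  exact ((hasDerivAt_id' t).fun_mul (hy.sub_const 1)).fun_div (hy.fun_sub (hasDerivAt_id' t)) hd
    |>.congr_deriv (by ring)

/-- The derivative is written through `t * (t - 1) * y'` and `t * (t - 1) * z'` so that
system (9) can be substituted into it by rewriting. -/
theorem HasDerivAt.pi2Z (hy : HasDerivAt y y' t) (hz : HasDerivAt z z' t) (a2 : 𝕜) (ht0 : t ≠ 0)
    (ht1 : t ≠ 1) :
    HasDerivAt (fun s => pi2Z a2 s (y s) (z s))
      (((2 * t - 1) * ((y t - t) ^ 2 * z t + (y t - t) * a2)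
        - (2 * (y t - t) * z t + a2) * (t * (t - 1) * y' - t * (t - 1))
        - (y t - t) ^ 2 * (t * (t - 1) * z')) / (t * (t - 1)) ^ 2) t := by
  have hw := hy.fun_sub (hasDerivAt_id' t)
  have hD : (t - 1) * t ≠ 0 := mul_ne_zero (sub_ne_zero.mpr ht1) ht0
  exact ((((hw.fun_pow 2).fun_mul hz).fun_add (hw.mul_const a2)).fun_neg).fun_div
    (((hasDerivAt_id' t).sub_const 1).fun_mul (hasDerivAt_id' t)) hD |>.congr_deriv (by ring)
end

theorem ham_backlund_pi2_general (a0 a1 a2 a3 a4 : ℂ)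
    (hsum : a0 + a1 + 2 * a2 + a3 + a4 = 1)
    (U : Set ℂ) (hU01 : ∀ t ∈ U, t ≠ 0 ∧ t ≠ 1)
    (y z : ℂ → ℂ)
    (hyz : IsHamSol a0 a1 a2 a3 a4 U y z)
    (hyt : ∀ t ∈ U, y t ≠ t) :
    IsHamSol a1 a0 a2 a4 a3 U
      (fun t => t * (y t - 1) / (y t - t))
      (fun t => -((y t - t) ^ 2 * z t + (y t - t) * a2) / ((t - 1) * t)) := by
  show IsHamSol a1 a0 a2 a4 a3 U (fun t => pi2Y t (y t)) (fun t => pi2Z a2 t (y t) (z t))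
  intro t ht
  obtain ⟨hy, hz, ey, ez⟩ := hyz t ht
  obtain ⟨ht0, ht1⟩ := hU01 t ht
  have hY := hy.hasDerivAt.pi2Y (hyt t ht)
  have hZ := hy.hasDerivAt.pi2Z hz.hasDerivAt a2 ht0 ht1
  refine ⟨hY.differentiableAt, hZ.differentiableAt, ?_, ?_⟩
  · rw [hY.deriv]
    exact eq_hamRhsY_pi2 hsum ht1 (hyt t ht) ey
  · rw [hZ.deriv]
    exact eq_hamRhsZ_pi2 hsum ht0 ht1 (hyt t ht) ey ez

/-- **Bäcklund transformation π₂.** If `α₀ + α₁ + 2α₂ + α₃ + α₄ = 1` and `(y, z)` solves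
the Hamiltonian system (9) on the open set `U ⊆ ℂ∖{0,1}` with `y t ≠ t` on `U`, then
`ỹ(t) = t(y(t)-1)/(y(t)-t)`, `z̃(t) = -((y(t)-t)²·z(t) + (y(t)-t)·α₂)/((t-1)t)` solves
system (9) on `U` with parameters `(α₁, α₀, α₂, α₄, α₃)`. -/
theorem ham_backlund_pi2 (a0 a1 a2 a3 a4 : ℂ)
    (hsum : a0 + a1 + 2 * a2 + a3 + a4 = 1)
    (U : Set ℂ) (hU : IsOpen U) (hU01 : ∀ t ∈ U, t ≠ 0 ∧ t ≠ 1)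
    (y z : ℂ → ℂ)
    (hyz : IsHamSol a0 a1 a2 a3 a4 U y z)
    (hyt : ∀ t ∈ U, y t ≠ t) :
    IsHamSol a1 a0 a2 a4 a3 U
      (fun t => t * (y t - 1) / (y t - t))
      (fun t => -((y t - t) ^ 2 * z t + (y t - t) * a2) / ((t - 1) * t)) :=
  ham_backlund_pi2_general a0 a1 a2 a3 a4 hsum U hU01 y z hyz hyt
end

section
/- Let α₀,α₁,α₂,α₃ be complex parameters, and let u be a twice differentiable complex function satisfying the Gauss hypergeometric equation u''(ξ) + ((1−α₃)/ξ + (1−α₀)/(2(ξ−1)))·u'(ξ) + ((α₁+α₂)α₂/(4ξ(ξ−1)))·u(ξ) = 0 on an open set V ⊆ ℂ∖{0,1}. Let W ⊆ ℂ be an open set with x, x−1, x−1/2 ≠ 0 and 4x(1−x) ∈ V for all x ∈ W. Then ψ(x) := u(4x(1−x)) satisfies Heun's equation (18): ψ''(x) + ((1−α₃)/x + (1−α₃)/(x−1) − α₀/(x−1/2))·ψ'(x) + ((α₁+α₂)α₂/(x(x−1)))·ψ(x) = 0 on W. -/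
/-!
With `ξ = 4x(1-x)` one has `dξ/dx = 4(1-2x)`, `d²ξ/dx² = -8` and `ξ - 1 = -(2x-1)²`. By the
second-order chain rule, Heun's operator applied to `u ∘ ξ` equals `16(2x-1)²` times the
hypergeometric operator applied to `u` at `ξ`; the factor is nonzero away from `x = 1/2`.
-/

open Filter Topology

section SecondOrderChainRule

variable {𝕜 : Type*} [NontriviallyNormedField 𝕜] {u g g' : 𝕜 → 𝕜} {g'' x : 𝕜}

theorem hasDerivAt_deriv_comp_of_eventually
    (hu : ∀ᶠ y in 𝓝 x, DifferentiableAt 𝕜 u (g y)) (hu' : DifferentiableAt 𝕜 (deriv u) (g x))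
    (hg : ∀ᶠ y in 𝓝 x, HasDerivAt g (g' y) y) (hg' : HasDerivAt g' g'' x) :
    HasDerivAt (deriv fun y => u (g y))
      (deriv (deriv u) (g x) * g' x ^ 2 + deriv u (g x) * g'') x := by
  have hfirst : deriv (fun y => u (g y)) =ᶠ[𝓝 x] fun y => deriv u (g y) * g' y := by
    filter_upwards [hu, hg] with y huy hgy
    exact (huy.hasDerivAt.comp y hgy).deriv
  have hprod := (hu'.hasDerivAt.comp x hg.self_of_nhds).mul hg'
  exact (hprod.congr_of_eventuallyEq hfirst).congr_deriv (by rw [Function.comp_apply]; ring)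

end SecondOrderChainRule

theorem hasDerivAt_four_mul_mul_one_sub (x : ℂ) :
    HasDerivAt (fun y : ℂ => 4 * y * (1 - y)) (4 - 8 * x) x :=
  (((hasDerivAt_id' x).const_mul 4).mul ((hasDerivAt_id' x).const_sub 1)).congr_deriv (by ring)

theorem hasDerivAt_four_sub_eight_mul (x : ℂ) : HasDerivAt (fun y : ℂ => 4 - 8 * y) (-8) x := by
  simpa using ((hasDerivAt_id' x).const_mul (8 : ℂ)).const_sub 4

noncomputable def hypergeometricOp (a0 a1 a2 a3 ξ u u' u'' : ℂ) : ℂ :=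
  u'' + ((1 - a3) / ξ + (1 - a0) / (2 * (ξ - 1))) * u' + ((a1 + a2) * a2 / (4 * ξ * (ξ - 1))) * u

noncomputable def heun18Op (a0 a1 a2 a3 x ψ ψ' ψ'' : ℂ) : ℂ :=
  ψ'' + ((1 - a3) / x + (1 - a3) / (x - 1) - a0 / (x - 1 / 2)) * ψ'
    + ((a1 + a2) * a2 / (x * (x - 1))) * ψ

theorem heun18Op_quadratic_pullback (a0 a1 a2 a3 u u' u'' : ℂ) {x : ℂ}
    (hx0 : x ≠ 0) (hx1 : x ≠ 1) (hx2 : x ≠ 1 / 2) :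
    heun18Op a0 a1 a2 a3 x u (u' * (4 - 8 * x)) (u'' * (4 - 8 * x) ^ 2 + u' * -8)
      = 16 * (2 * x - 1) ^ 2 * hypergeometricOp a0 a1 a2 a3 (4 * x * (1 - x)) u u' u'' := by
  have h2x : x * 2 - 1 ≠ 0 := fun h => hx2 (by linear_combination h / 2)
  have hξ1 : 4 * x * (1 - x) - 1 ≠ 0 := by
    rw [show 4 * x * (1 - x) - 1 = -(x * 2 - 1) ^ 2 by ring]
    exact neg_ne_zero.mpr (pow_ne_zero 2 h2x)
  unfold heun18Op hypergeometricOp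
  field_simp
  ring

theorem heun18_reduces_to_hypergeometric_general (a0 a1 a2 a3 : ℂ)
    (V : Set ℂ)
    (u : ℂ → ℂ)
    (hu : ∀ ξ ∈ V, DifferentiableAt ℂ u ξ ∧ DifferentiableAt ℂ (deriv u) ξ)
    (hueq : ∀ ξ ∈ V,
      deriv (deriv u) ξ
        + ((1 - a3) / ξ + (1 - a0) / (2 * (ξ - 1))) * deriv u ξ
        + ((a1 + a2) * a2 / (4 * ξ * (ξ - 1))) * u ξ = 0)
    (W : Set ℂ) (hW : IsOpen W)
    (hWreg : ∀ x ∈ W, x ≠ 0 ∧ x ≠ 1 ∧ x ≠ 1 / 2 ∧ 4 * x * (1 - x) ∈ V) :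
    ∀ x ∈ W,
      deriv (deriv fun x => u (4 * x * (1 - x))) x
        + ((1 - a3) / x + (1 - a3) / (x - 1) - a0 / (x - 1 / 2)) *
            deriv (fun x => u (4 * x * (1 - x))) x
        + ((a1 + a2) * a2 / (x * (x - 1))) * u (4 * x * (1 - x)) = 0 := by
  intro x hx
  obtain ⟨hx0, hx1, hx2, hxV⟩ := hWreg x hx
  have hψ' : deriv (fun y => u (4 * y * (1 - y))) x = deriv u (4 * x * (1 - x)) * (4 - 8 * x) :=
    ((hu _ hxV).1.hasDerivAt.comp x (hasDerivAt_four_mul_mul_one_sub x)).deriv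
  have hψ'' := (hasDerivAt_deriv_comp_of_eventually
    (eventually_of_mem (hW.mem_nhds hx) fun y hy => (hu _ (hWreg y hy).2.2.2).1) (hu _ hxV).2
    (Eventually.of_forall hasDerivAt_four_mul_mul_one_sub) (hasDerivAt_four_sub_eight_mul x)).deriv
  change heun18Op a0 a1 a2 a3 x _ _ _ = 0
  rw [hψ', hψ'', heun18Op_quadratic_pullback _ _ _ _ _ _ _ hx0 hx1 hx2]
  exact mul_eq_zero_of_right _ (hueq _ hxV)

/-- **Reduction of Heun's equation (18) to the hypergeometric equation.**
Let `u` satisfy the Gauss hypergeometric equation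
`u'' + ((1-α₃)/ξ + (1-α₀)/(2(ξ-1)))·u' + ((α₁+α₂)α₂/(4ξ(ξ-1)))·u = 0` on an open set
`V ⊆ ℂ∖{0,1}`. If `W` is an open set with `x, x-1, x-1/2 ≠ 0` and `4x(1-x) ∈ V` for all
`x ∈ W`, then `ψ(x) := u(4x(1-x))` satisfies Heun's equation (18)
`ψ'' + ((1-α₃)/x + (1-α₃)/(x-1) - α₀/(x-1/2))·ψ' + ((α₁+α₂)α₂/(x(x-1)))·ψ = 0` on `W`. -/
theorem heun18_reduces_to_hypergeometric (a0 a1 a2 a3 : ℂ)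
    (V : Set ℂ) (hV : IsOpen V) (hV01 : ∀ ξ ∈ V, ξ ≠ 0 ∧ ξ ≠ 1)
    (u : ℂ → ℂ)
    (hu : ∀ ξ ∈ V, DifferentiableAt ℂ u ξ ∧ DifferentiableAt ℂ (deriv u) ξ)
    (hueq : ∀ ξ ∈ V,
      deriv (deriv u) ξ
        + ((1 - a3) / ξ + (1 - a0) / (2 * (ξ - 1))) * deriv u ξ
        + ((a1 + a2) * a2 / (4 * ξ * (ξ - 1))) * u ξ = 0)
    (W : Set ℂ) (hW : IsOpen W)
    (hWreg : ∀ x ∈ W, x ≠ 0 ∧ x ≠ 1 ∧ x ≠ 1 / 2 ∧ 4 * x * (1 - x) ∈ V) :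
    ∀ x ∈ W,
      deriv (deriv fun x => u (4 * x * (1 - x))) x
        + ((1 - a3) / x + (1 - a3) / (x - 1) - a0 / (x - 1 / 2)) *
            deriv (fun x => u (4 * x * (1 - x))) x
        + ((a1 + a2) * a2 / (x * (x - 1))) * u (4 * x * (1 - x)) = 0 :=
  heun18_reduces_to_hypergeometric_general a0 a1 a2 a3 V u hu hueq W hW hWreg
end

section
/- Let α₀, α₁, α₃ be complex numbers and set A = 2cos(πα₃), B = 2cos(π(α₀+1)), C = 2cos(πα₁). Define X₁ = 2(cos(π(α₃+1)) + cos(π(α₀−α₁−1)/2) + cos(π(α₀+α₁−1)/2)), X₂ = 2(cos(π(α₃+1)) + cos(π(α₀−α₁+1)/2) + cos(π(α₀+α₁+1)/2)), X₃ = 2(cos(πα₃) + cos(π(α₀−α₁−1)/2) + cos(π(α₀+α₁+1)/2)), X₄ = 2(cos(πα₃) + cos(π(α₀−α₁+1)/2) + cos(π(α₀+α₁−1)/2)). Then for every X ∈ ℂ: (X² − A² − BC)² − 4(2X² − 2(AB+AC)X + 2A² + B² + C² + A²BC − 4) = (X−X₁)(X−X₂)(X−X₃)(X−X₄). That is, the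 discriminant in Y of the quadratic Y² + (X²−A²−BC)Y + (2X² − 2(AB+AC)X + 2A² + B² + C² + A²BC − 4) factors into the four roots X₁,…,X₄, which are exactly the trace coordinates p₁ₜ = pₜ₀ of the linear monodromy of the four symmetric solutions (S2-1)–(S2-4) of σ₁. -/
open Complex

/-! With `P = πα₀/2` and `Q = πα₁/2`, the traces become `B = 2 - 4 cos² P`,
`C = 4 cos² Q - 2`, and by sum-to-product the four roots are `-A ± 4 sin P cos Q` and
`A ∓ 4 cos P sin Q`. Grouping them in pairs, the product of the four linear factors is
`((X + A)² - 16 sin² P cos² Q) ((X - A)² - 16 cos² P sin² Q)`, which after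
`sin² = 1 - cos²` is a polynomial identity in `A`, `cos P`, `cos Q` and `X`. -/

/-- The discriminant of Fricke's relation as a quadratic in `Y = p₀₁`. -/
def frickeDiscriminant {R : Type*} [CommRing R] (A B C X : R) : R :=
  (X ^ 2 - A ^ 2 - B * C) ^ 2
    - 4 * (2 * X ^ 2 - 2 * (A * B + A * C) * X + 2 * A ^ 2 + B ^ 2 + C ^ 2 + A ^ 2 * B * C - 4)

theorem frickeDiscriminant_eq_prod {R : Type*} [CommRing R] (A X c s c' s' : R)
    (h : s ^ 2 + c ^ 2 = 1) (h' : s' ^ 2 + c' ^ 2 = 1) :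
    frickeDiscriminant A (2 - 4 * c ^ 2) (4 * c' ^ 2 - 2) X =
      (X - (-A + 4 * s * c')) * (X - (-A - 4 * s * c'))
        * (X - (A - 4 * c * s')) * (X - (A + 4 * c * s')) := by
  unfold frickeDiscriminant
  linear_combination (16 * c' ^ 2 * ((X - A) ^ 2 - 16 * c ^ 2 * (1 - c' ^ 2))) * h
    + (16 * c ^ 2 * ((X + A) ^ 2 - 16 * s ^ 2 * c' ^ 2)) * h'

theorem Complex.cos_sub_add_cos_add (u v : ℂ) :
    cos (u - v) + cos (u + v) = 2 * cos u * cos v := by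
  rw [cos_sub, cos_add]; ring

/-- **Theorem 9 (algebraic content).** With `A = 2cos(πα₃)`, `B = 2cos(π(α₀+1))`,
`C = 2cos(πα₁)`, the discriminant in `Y` of the quadratic form of Fricke's relation
`Y² + (X²-A²-BC)Y + (2X² - 2(AB+AC)X + 2A² + B² + C² + A²BC - 4)` factors as
`(X-X₁)(X-X₂)(X-X₃)(X-X₄)`, where `X₁,…,X₄` are the trace coordinates `p₁ₜ = pₜ₀`
of the linear monodromy of the four symmetric solutions (S2-1)–(S2-4) of σ₁. -/
theorem discriminant_factorization_sigma1 (a0 a1 a3 : ℂ)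
    (A B C : ℂ)
    (hA : A = 2 * Complex.cos (Real.pi * a3))
    (hB : B = 2 * Complex.cos (Real.pi * (a0 + 1)))
    (hC : C = 2 * Complex.cos (Real.pi * a1))
    (X1 X2 X3 X4 : ℂ)
    (hX1 : X1 = 2 * (Complex.cos (Real.pi * (a3 + 1))
      + Complex.cos (Real.pi * (a0 - a1 - 1) / 2)
      + Complex.cos (Real.pi * (a0 + a1 - 1) / 2)))
    (hX2 : X2 = 2 * (Complex.cos (Real.pi * (a3 + 1))
      + Complex.cos (Real.pi * (a0 - a1 + 1) / 2)
      + Complex.cos (Real.pi * (a0 + a1 + 1) / 2)))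
    (hX3 : X3 = 2 * (Complex.cos (Real.pi * a3)
      + Complex.cos (Real.pi * (a0 - a1 - 1) / 2)
      + Complex.cos (Real.pi * (a0 + a1 + 1) / 2)))
    (hX4 : X4 = 2 * (Complex.cos (Real.pi * a3)
      + Complex.cos (Real.pi * (a0 - a1 + 1) / 2)
      + Complex.cos (Real.pi * (a0 + a1 - 1) / 2))) :
    ∀ X : ℂ,
      (X ^ 2 - A ^ 2 - B * C) ^ 2
          - 4 * (2 * X ^ 2 - 2 * (A * B + A * C) * X
            + 2 * A ^ 2 + B ^ 2 + C ^ 2 + A ^ 2 * B * C - 4) =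
        (X - X1) * (X - X2) * (X - X3) * (X - X4) := by
  intro X
  set P : ℂ := Real.pi * a0 / 2
  set Q : ℂ := Real.pi * a1 / 2
  have hB' : B = 2 - 4 * cos P ^ 2 := by
    rw [hB, show (Real.pi : ℂ) * (a0 + 1) = 2 * P + Real.pi by ring, cos_add_pi, cos_two_mul]
    ring
  have hC' : C = 4 * cos Q ^ 2 - 2 := by
    rw [hC, show (Real.pi : ℂ) * a1 = 2 * Q by ring, cos_two_mul]
    ring
  have hcos_a3_add_one : cos (Real.pi * (a3 + 1)) = -cos (Real.pi * a3) := by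
    rw [mul_add_one, cos_add_pi]
  have hX1' : X1 = -A + 4 * sin P * cos Q := by
    rw [hX1, hcos_a3_add_one, add_assoc,
      show (Real.pi : ℂ) * (a0 - a1 - 1) / 2 = P - Real.pi / 2 - Q by ring,
      show (Real.pi : ℂ) * (a0 + a1 - 1) / 2 = P - Real.pi / 2 + Q by ring,
      cos_sub_add_cos_add, cos_sub_pi_div_two, hA]
    ring
  have hX2' : X2 = -A - 4 * sin P * cos Q := by
    rw [hX2, hcos_a3_add_one, add_assoc,
      show (Real.pi : ℂ) * (a0 - a1 + 1) / 2 = P + Real.pi / 2 - Q by ring,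
      show (Real.pi : ℂ) * (a0 + a1 + 1) / 2 = P + Real.pi / 2 + Q by ring,
      cos_sub_add_cos_add, cos_add_pi_div_two, hA]
    ring
  have hX3' : X3 = A - 4 * cos P * sin Q := by
    rw [hX3, add_assoc,
      show (Real.pi : ℂ) * (a0 - a1 - 1) / 2 = P - (Q + Real.pi / 2) by ring,
      show (Real.pi : ℂ) * (a0 + a1 + 1) / 2 = P + (Q + Real.pi / 2) by ring,
      cos_sub_add_cos_add, cos_add_pi_div_two, hA]
    ring
  have hX4' : X4 = A + 4 * cos P * sin Q := by
    rw [hX4, add_assoc,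
      show (Real.pi : ℂ) * (a0 - a1 + 1) / 2 = P - (Q - Real.pi / 2) by ring,
      show (Real.pi : ℂ) * (a0 + a1 - 1) / 2 = P + (Q - Real.pi / 2) by ring,
      cos_sub_add_cos_add, cos_sub_pi_div_two, hA]
    ring
  rw [hB', hC', hX1', hX2', hX3', hX4']
  exact frickeDiscriminant_eq_prod A X _ _ _ _ (sin_sq_add_cos_sq P) (sin_sq_add_cos_sq Q)
end

section
/- Let α₀, α₁ be complex numbers and set A = 2cos(πα₁), B = 2cos(π(α₀−1)). Define X₁ = −1 − 2cos(2πα₀/3) + 4cos(πα₀/3)cos(πα₁), X₂ = −1 − 2cos(2π(α₀−2)/3) + 4cos(π(α₀−2)/3)cos(πα₁), X₃ = −1 − 2cos(2π(α₀+2)/3) + 4cos(π(α₀+2)/3)cos(πα₁). Then for every X ∈ ℂ: X³ + 3X² − 3(A² + AB)X + 3A² + B² + A³B − 4 = (X−X₁)(X−X₂)(X−X₃). The three roots X₁, X₂, X₃ are exactly the trace coordinates pₜ₀ = pₜ₁ = pₜ∞ of the linear monodromy of the three symmetric solutions (S3-2), (S3-1), (S3-3) of σ₂∘σ₁. -/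
/-!
Put `θ = πα₀/3`, `xₖ = 2cos(θ - 2πk/3)` (`k = 0, ±1`) and `A = 2cos(πα₁)`. By the double-angle
formula each `Xₖ` equals `1 + A xₖ - xₖ²`, and by the triple-angle formula the `xₖ` are the three
roots of `t³ - 3t - 2cos 3θ = t³ - 3t + B`. The cubic with roots `1 + A xₖ - xₖ²` is then
computed from the elementary symmetric functions `0, -3, -B` of the `xₖ`.
-/

open Complex

theorem fricke_cubic_eq_prod_of_vieta {R : Type*} [CommRing R] {A B x₀ x₁ x₂ : R}
    (h₁ : x₀ + x₁ + x₂ = 0) (h₂ : x₀ * x₁ + x₀ * x₂ + x₁ * x₂ = -3) (h₃ : x₀ * x₁ * x₂ = -B)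
    (X : R) :
    X ^ 3 + 3 * X ^ 2 - 3 * (A ^ 2 + A * B) * X + 3 * A ^ 2 + B ^ 2 + A ^ 3 * B - 4 =
      (X - (1 + A * x₀ - x₀ ^ 2)) * (X - (1 + A * x₁ - x₁ ^ 2)) *
        (X - (1 + A * x₂ - x₂ ^ 2)) := by
  grind

theorem cos_two_pi_div_three : cos (2 * Real.pi / 3) = -1 / 2 := by
  have h : (2 * Real.pi / 3 : ℂ) = ((Real.pi - Real.pi / 3 : ℝ) : ℂ) := by push_cast; ring
  rw [h, ← ofReal_cos, Real.cos_pi_sub, Real.cos_pi_div_three]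
  push_cast; ring

theorem sin_sq_two_pi_div_three : sin (2 * Real.pi / 3) ^ 2 = 3 / 4 := by
  have h := sin_sq_add_cos_sq (2 * Real.pi / 3 : ℂ)
  rw [cos_two_pi_div_three] at h
  linear_combination h

section

variable (z : ℂ)

theorem cos_sub_add_cos_add_two_pi_div_three :
    cos (z - 2 * Real.pi / 3) + cos (z + 2 * Real.pi / 3) = -cos z := by
  rw [cos_sub, cos_add, cos_two_pi_div_three]
  ring

theorem cos_sub_mul_cos_add_two_pi_div_three :
    cos (z - 2 * Real.pi / 3) * cos (z + 2 * Real.pi / 3) = cos z ^ 2 - 3 / 4 := by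
  rw [cos_sub, cos_add, cos_two_pi_div_three]
  linear_combination (-sin z ^ 2) * sin_sq_two_pi_div_three - 3 / 4 * sin_sq_add_cos_sq z

theorem neg_one_sub_two_cos_two_mul_add_four_cos_mul (w : ℂ) :
    -1 - 2 * cos (2 * z) + 4 * cos z * cos w = 1 + 2 * cos w * (2 * cos z) - (2 * cos z) ^ 2 := by
  rw [cos_two_mul]
  ring

end

/-- **Theorem 10 (algebraic content).** With `A = 2cos(πα₁)`, `B = 2cos(π(α₀-1))`,
the cubic form of Fricke's relation `X³ + 3X² - 3(A²+AB)X + 3A² + B² + A³B - 4`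
factors as `(X-X₁)(X-X₂)(X-X₃)`, where `X₁, X₂, X₃` are the trace coordinates
`pₜ₀ = pₜ₁ = pₜ∞` of the linear monodromy of the three symmetric solutions
(S3-2), (S3-1), (S3-3) of σ₂∘σ₁. -/
theorem cubic_factorization_sigma2_sigma1 (a0 a1 : ℂ)
    (A B : ℂ)
    (hA : A = 2 * Complex.cos (Real.pi * a1))
    (hB : B = 2 * Complex.cos (Real.pi * (a0 - 1)))
    (X1 X2 X3 : ℂ)
    (hX1 : X1 = -1 - 2 * Complex.cos (2 * Real.pi * a0 / 3)
      + 4 * Complex.cos (Real.pi * a0 / 3) * Complex.cos (Real.pi * a1))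
    (hX2 : X2 = -1 - 2 * Complex.cos (2 * Real.pi * (a0 - 2) / 3)
      + 4 * Complex.cos (Real.pi * (a0 - 2) / 3) * Complex.cos (Real.pi * a1))
    (hX3 : X3 = -1 - 2 * Complex.cos (2 * Real.pi * (a0 + 2) / 3)
      + 4 * Complex.cos (Real.pi * (a0 + 2) / 3) * Complex.cos (Real.pi * a1)) :
    ∀ X : ℂ,
      X ^ 3 + 3 * X ^ 2 - 3 * (A ^ 2 + A * B) * X
          + 3 * A ^ 2 + B ^ 2 + A ^ 3 * B - 4 =
        (X - X1) * (X - X2) * (X - X3) := by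
  intro X
  set θ : ℂ := Real.pi * a0 / 3
  have hsum := cos_sub_add_cos_add_two_pi_div_three θ
  have hprod := cos_sub_mul_cos_add_two_pi_div_three θ
  have hB' : B = -2 * cos (3 * θ) := by
    rw [hB, show (Real.pi : ℂ) * (a0 - 1) = 3 * θ - Real.pi by ring, cos_sub_pi]
    ring
  rw [hX1, hX2, hX3, show (2 * Real.pi * a0 / 3 : ℂ) = 2 * θ by ring,
    show (2 * Real.pi * (a0 - 2) / 3 : ℂ) = 2 * (θ - 2 * Real.pi / 3) by ring,
    show (Real.pi * (a0 - 2) / 3 : ℂ) = θ - 2 * Real.pi / 3 by ring,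
    show (2 * Real.pi * (a0 + 2) / 3 : ℂ) = 2 * (θ + 2 * Real.pi / 3) by ring,
    show (Real.pi * (a0 + 2) / 3 : ℂ) = θ + 2 * Real.pi / 3 by ring]
  simp only [neg_one_sub_two_cos_two_mul_add_four_cos_mul, ← hA]
  refine fricke_cubic_eq_prod_of_vieta ?_ ?_ ?_ X
  · linear_combination 2 * hsum
  · linear_combination 4 * cos θ * hsum + 4 * hprod
  · linear_combination 8 * cos θ * hprod + hB' - 2 * cos_three_mul θ
end

section
/- Let α₀, α₁, α₃ be complex numbers, and set p₀ = p₁ = 2cos(πα₃), pₜ = 2cos(π(α₀+1)), p∞ = 2cos(πα₁), p₁ₜ = pₜ₀ = 2(cos(π(α₃+1)) + cos(π(α₀−α₁−1)/2) + cos(π(α₀+α₁−1)/2)), and p₀₁ = −2(1 + cos(π(α₀+1)) + cos(πα₁) + 4cos(πα₁/2)·cos(πα₃)·cos(π(α₀+1)/2)). Then these values satisfy Fricke's cubic relation: p₀₁p₁ₜpₜ₀ + p₀₁² + p₁ₜ² + pₜ₀² − (p₀p₁ + pₜp∞)p₀₁ − (p₁pₜ + p₀p∞)p₁ₜ − (pₜp₀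 + p₁p∞)pₜ₀ + p₀² + p₁² + pₜ² + p∞² + p₀pₜp₁p∞ − 4 = 0. -/
/-!
Put `a = 2 cos (π α₃)`, `d = 2 cos (π α₁ / 2)` and `e = 2 cos (π (α₀ + 1) / 2)`. By the double-angle
and product-to-sum formulas the trace coordinates are polynomials in `a, d, e`:
`p₀ = p₁ = a`, `pₜ = e² - 2`, `p∞ = d² - 2`, `p₁ₜ = pₜ₀ = -(a + d e)` and
`p₀₁ = -(d² + e² - 2 + a d e)`, and Fricke's cubic vanishes identically on this parametrisation.
-/

open Complex
open scoped Real

def frickeCubic {R : Type*} [CommRing R] (p0 p1 pt pinf p01 p1t pt0 : R) : R :=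
  p01 * p1t * pt0 + p01 ^ 2 + p1t ^ 2 + pt0 ^ 2
    - (p0 * p1 + pt * pinf) * p01 - (p1 * pt + p0 * pinf) * p1t
    - (pt * p0 + p1 * pinf) * pt0
    + p0 ^ 2 + p1 ^ 2 + pt ^ 2 + pinf ^ 2 + p0 * pt * p1 * pinf - 4

theorem frickeCubic_symmetric_eq_zero {R : Type*} [CommRing R] (a d e : R) :
    frickeCubic a a (e ^ 2 - 2) (d ^ 2 - 2) (-(d ^ 2 + e ^ 2 - 2 + a * d * e))
      (-(a + d * e)) (-(a + d * e)) = 0 := by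
  unfold frickeCubic
  ring

theorem cos_eq_two_mul_cos_half_sq_sub_one (x : ℂ) : cos x = 2 * cos (x / 2) ^ 2 - 1 := by
  rw [cos_sq, mul_div_cancel₀ x two_ne_zero]
  ring

theorem two_mul_cos_add_pi_add_cos_sub_pi_add_cos_sub_pi (c u v : ℂ) :
    2 * (cos (c + π) + cos (u - v - π) + cos (u + v - π))
      = -(2 * cos c + 2 * cos u * (2 * cos v)) := by
  rw [cos_add_pi, cos_sub_pi, cos_sub_pi, cos_sub, cos_add]
  ring

/-- **The linear monodromy of the symmetric solution (S2-1) satisfies Fricke's cubic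
relation.** The trace coordinates of the linear monodromy of the symmetric solution
(S2-1) of σ₁ (computed in Theorem 7), expressed in cosines of the Painlevé parameters,
satisfy Fricke's cubic relation (1). -/
theorem fricke_relation_S21 (a0 a1 a3 : ℂ)
    (p0 p1 pt pinf p01 p1t pt0 : ℂ)
    (hp0 : p0 = 2 * Complex.cos (Real.pi * a3))
    (hp1 : p1 = 2 * Complex.cos (Real.pi * a3))
    (hpt : pt = 2 * Complex.cos (Real.pi * (a0 + 1)))
    (hpinf : pinf = 2 * Complex.cos (Real.pi * a1))
    (hp1t : p1t = 2 * (Complex.cos (Real.pi * (a3 + 1))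
      + Complex.cos (Real.pi * (a0 - a1 - 1) / 2)
      + Complex.cos (Real.pi * (a0 + a1 - 1) / 2)))
    (hpt0 : pt0 = 2 * (Complex.cos (Real.pi * (a3 + 1))
      + Complex.cos (Real.pi * (a0 - a1 - 1) / 2)
      + Complex.cos (Real.pi * (a0 + a1 - 1) / 2)))
    (hp01 : p01 = -2 * (1 + Complex.cos (Real.pi * (a0 + 1))
      + Complex.cos (Real.pi * a1)
      + 4 * Complex.cos (Real.pi * a1 / 2) * Complex.cos (Real.pi * a3) *
          Complex.cos (Real.pi * (a0 + 1) / 2))) :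
    p01 * p1t * pt0 + p01 ^ 2 + p1t ^ 2 + pt0 ^ 2
      - (p0 * p1 + pt * pinf) * p01 - (p1 * pt + p0 * pinf) * p1t
      - (pt * p0 + p1 * pinf) * pt0
      + p0 ^ 2 + p1 ^ 2 + pt ^ 2 + pinf ^ 2 + p0 * pt * p1 * pinf - 4 = 0 := by
  have hc : (π : ℂ) * (a3 + 1) = π * a3 + π := by ring
  have hvu : (π : ℂ) * (a0 - a1 - 1) / 2 = π * (a0 + 1) / 2 - π * a1 / 2 - π := by ring
  have huv : (π : ℂ) * (a0 + a1 - 1) / 2 = π * (a0 + 1) / 2 + π * a1 / 2 - π := by ring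
  rw [hc, hvu, huv, two_mul_cos_add_pi_add_cos_sub_pi_add_cos_sub_pi] at hp1t hpt0
  rw [cos_eq_two_mul_cos_half_sq_sub_one (π * (a0 + 1))] at hpt
  rw [cos_eq_two_mul_cos_half_sq_sub_one (π * a1)] at hpinf
  rw [cos_eq_two_mul_cos_half_sq_sub_one (π * (a0 + 1)),
    cos_eq_two_mul_cos_half_sq_sub_one (π * a1)] at hp01
  have key := frickeCubic_symmetric_eq_zero (2 * cos (π * a3)) (2 * cos (π * a1 / 2))
    (2 * cos (π * (a0 + 1) / 2))
  unfold frickeCubic at key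
  subst_vars
  linear_combination key
end

section
/- Let α₀, α₁ be complex numbers, and set A = 2cos(πα₁), B = 2cos(π(α₀−1)), X = −1 − 2cos(2πα₀/3) + 4cos(πα₀/3)cos(πα₁). Then X³ + 3X² − 3(A² + AB)X + 3A² + B² + A³B − 4 = 0. -/
/-!
Put `c = 2cos(πα₀/3)`. The double and triple angle formulas, together with `cos(x - π) = -cos x`,
give `X = 1 - c² + cA` and `B = 3c - c³`, and the cubic then vanishes identically as a polynomial
in `A` and `c`. Its three roots are the values of `1 - c² + cA` at the three roots `c` of
`c³ - 3c + B = 0`, i.e. at `c = 2cos(π(α₀ + 2k)/3)`.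
-/

open Complex

theorem fricke_cubic_eq_zero {R : Type*} [CommRing R] (A c : R) :
    (1 - c ^ 2 + c * A) ^ 3 + 3 * (1 - c ^ 2 + c * A) ^ 2
      - 3 * (A ^ 2 + A * (3 * c - c ^ 3)) * (1 - c ^ 2 + c * A)
      + 3 * A ^ 2 + (3 * c - c ^ 3) ^ 2 + A ^ 3 * (3 * c - c ^ 3) - 4 = 0 := by
  ring

/-- **The trace coordinate of the symmetric solution (S3-2) is a root of the cubic.**
With `A = 2cos(πα₁)`, `B = 2cos(π(α₀-1))` and
`X = -1 - 2cos(2πα₀/3) + 4cos(πα₀/3)cos(πα₁)` (the common trace coordinate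
`pₜ₀ = pₜ₁ = pₜ∞` of the linear monodromy of the symmetric solution (S3-2) of σ₂∘σ₁),
one has `X³ + 3X² - 3(A²+AB)X + 3A² + B² + A³B - 4 = 0`. -/
theorem S32_trace_root_of_cubic (a0 a1 : ℂ)
    (A B X : ℂ)
    (hA : A = 2 * Complex.cos (Real.pi * a1))
    (hB : B = 2 * Complex.cos (Real.pi * (a0 - 1)))
    (hX : X = -1 - 2 * Complex.cos (2 * Real.pi * a0 / 3)
      + 4 * Complex.cos (Real.pi * a0 / 3) * Complex.cos (Real.pi * a1)) :
    X ^ 3 + 3 * X ^ 2 - 3 * (A ^ 2 + A * B) * X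
      + 3 * A ^ 2 + B ^ 2 + A ^ 3 * B - 4 = 0 := by
  set θ := (Real.pi : ℂ) * a0 / 3
  have hX' : X = 1 - (2 * cos θ) ^ 2 + 2 * cos θ * A := by
    rw [hX, hA, show 2 * (Real.pi : ℂ) * a0 / 3 = 2 * θ by ring, cos_two_mul]
    ring
  have hB' : B = 3 * (2 * cos θ) - (2 * cos θ) ^ 3 := by
    rw [hB, show (Real.pi : ℂ) * (a0 - 1) = 3 * θ - Real.pi by ring, cos_sub_pi, cos_three_mul]
    ring
  rw [hX', hB']
  exact fricke_cubic_eq_zero A (2 * cos θ)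
end

section
/- Let α₁,α₂,α₃,α₄ be complex parameters and set α₀ = 0. Let z be a differentiable function on an open set U ⊆ ℂ∖{0,1} satisfying the Riccati equation (17): t(t−1)·z'(t) = −t(t−1)z² + (1 − 2t + α₃t + α₄(t−1))z − (α₁+α₂)α₂. Then the pair (y,z) with y(t) = t is a solution of the Hamiltonian system (9) with parameters (0, α₁, α₂, α₃, α₄) on U. -/
/-- On `y = t` the first equation of (9) reduces to `t(t-1) = (1 - α₀)t(t-1)`, an identity
exactly when `α₀ = 0`. -/
theorem isHamSol_id_iff {a1 a2 a3 a4 : ℂ} {U : Set ℂ} {z : ℂ → ℂ} :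
    IsHamSol 0 a1 a2 a3 a4 U (fun t => t) z ↔
      ∀ t ∈ U, DifferentiableAt ℂ z t ∧
        t * (t - 1) * deriv z t =
          -t * (t - 1) * z t ^ 2 + (1 - 2 * t + a3 * t + a4 * (t - 1)) * z t
            - (a1 + a2) * a2 := by
  refine forall₂_congr fun t _ => ?_
  have hy : t * (t - 1) * deriv (fun t : ℂ => t) t
      = 2 * t * (t - 1) * (t - t) * z t - (0 - 1) * t * (t - 1)
        - a3 * t * (t - t) - a4 * (t - 1) * (t - t) := by
    rw [deriv_id'']; ring
  have hrhs : -(t * (t - 1) + (t - 1) * (t - t) + t * (t - t)) * z t ^ 2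
        + ((2 * t - 1) * (0 - 1) + (2 * t - t) * a3 + (2 * t - t - 1) * a4) * z t
        - (a1 + a2) * a2
      = -t * (t - 1) * z t ^ 2 + (1 - 2 * t + a3 * t + a4 * (t - 1)) * z t
        - (a1 + a2) * a2 := by
    ring
  simp only [differentiableAt_fun_id, hy, hrhs, true_and]

theorem riccati_solution_alpha0_zero_general (a1 a2 a3 a4 : ℂ)
    (U : Set ℂ)
    (z : ℂ → ℂ)
    (hz : ∀ t ∈ U, DifferentiableAt ℂ z t)
    (hzeq : ∀ t ∈ U,
      t * (t - 1) * deriv z t =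
        -t * (t - 1) * z t ^ 2 + (1 - 2 * t + a3 * t + a4 * (t - 1)) * z t
          - (a1 + a2) * a2) :
    IsHamSol 0 a1 a2 a3 a4 U (fun t => t) z :=
  isHamSol_id_iff.mpr fun t ht => ⟨hz t ht, hzeq t ht⟩

/-- **Riccati-type classical solutions for α₀ = 0.** If `z` is a differentiable function
on an open set `U ⊆ ℂ∖{0,1}` satisfying the Riccati equation (17)
`t(t-1)·z' = -t(t-1)z² + (1 - 2t + α₃t + α₄(t-1))z - (α₁+α₂)α₂`, then the pair
`(y, z)` with `y(t) = t` is a solution of the Hamiltonian system (9) with parameters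
`(0, α₁, α₂, α₃, α₄)` on `U`. -/
theorem riccati_solution_alpha0_zero (a1 a2 a3 a4 : ℂ)
    (U : Set ℂ) (hU : IsOpen U) (hU01 : ∀ t ∈ U, t ≠ 0 ∧ t ≠ 1)
    (z : ℂ → ℂ)
    (hz : ∀ t ∈ U, DifferentiableAt ℂ z t)
    (hzeq : ∀ t ∈ U,
      t * (t - 1) * deriv z t =
        -t * (t - 1) * z t ^ 2 + (1 - 2 * t + a3 * t + a4 * (t - 1)) * z t
          - (a1 + a2) * a2) :
    IsHamSol 0 a1 a2 a3 a4 U (fun t => t) z :=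
  riccati_solution_alpha0_zero_general a1 a2 a3 a4 U z hz hzeq
end
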